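/- Let μ be an unconditional log-concave measure on R^n, K a symmetric convex body, and u a standard basis vector. Then μ(S_u K) ≥ μ(K). -/

import Mathlib

open MeasureTheory Set Pointwise
open scoped InnerProductSpace ENNReal

noncomputable section

/-- `ℝ^n` with the Euclidean structure. -/
abbrev E (n : ℕ) := EuclideanSpace ℝ (Fin n)

/-- The polar body `K° = {y : ∀ x ∈ K, ⟨x,y⟩ ≤ 1}`. -/
def polarBody {n : ℕ} (K : Set (E n)) : Set (E n) := {y | ∀ x ∈ K, ⟪x, y⟫_ℝ ≤ 1}

/-- A set is unconditional if it is invariant under coordinate-wise sign changes. -/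
def Uncond {n : ℕ} (K : Set (E n)) : Prop :=
  ∀ x ∈ K, ∀ ε : Fin n → ℝ, (∀ i, ε i = 1 ∨ ε i = -1) →
    (WithLp.toLp 2 (fun i => ε i * x i) : E n) ∈ K

/-- A convex body: compact, convex, with nonempty interior. -/
def IsConvexBody {n : ℕ} (K : Set (E n)) : Prop :=
  IsCompact K ∧ Convex ℝ K ∧ (interior K).Nonempty

/-- The Steiner symmetral of `K` in direction `u`: over each point of `u^⊥` the fiber
`K_y` is replaced by `(K_y + (-K_y))/2`. -/
def steiner {n : ℕ} (u : E n) (K : Set (E n)) : Set (E n) :=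
  {x | ∃ s t : ℝ, (x - ⟪x, u⟫_ℝ • u + s • u) ∈ K ∧ (x - ⟪x, u⟫_ℝ • u + t • u) ∈ K ∧
    ⟪x, u⟫_ℝ = (s - t) / 2}

/-- The geometric mean body `K^{1/2} L^{1/2}`. -/
def geomMean {n : ℕ} (K L : Set (E n)) : Set (E n) :=
  {z | ∃ x ∈ K, ∃ y ∈ L, ∀ i, |z i| = |x i| ^ ((1 : ℝ) / 2) * |y i| ^ ((1 : ℝ) / 2)}

/-!
By Fubini in the coordinate direction `u = e_i`, it suffices to compare, on every line parallel
to `u`, the integral of the density over the fiber of `K` with the one over the fiber of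
`S_u K`. The fiber of `K` is a segment `[a, b]`, and the fiber of `S_u K` contains the centred
segment of the same length. On the line, `f` is even (unconditionality) and quasiconcave
(log-concavity), so its superlevel sets are centred intervals, and a centred interval meets a
centred segment of length `b - a` in at least as much length as it meets `[a, b]`. The
layer-cake formula turns this into the inequality of integrals.
-/

section LogConcave

variable {F G : Type*} [AddCommGroup F] [Module ℝ F] [AddCommGroup G] [Module ℝ G]

def IsLogConcave (f : F → ℝ) : Prop :=
  ∀ x y : F, ∀ t ∈ Icc (0 : ℝ) 1, f x ^ (1 - t) * f y ^ t ≤ f ((1 - t) • x + t • y)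

lemma IsLogConcave.comp_affineMap {f : F → ℝ} (hf : IsLogConcave f) (φ : G →ᵃ[ℝ] F) :
    IsLogConcave (f ∘ φ) := by
  intro x y t ht
  simpa only [Function.comp_apply, Convex.combo_affine_apply (sub_add_cancel 1 t)]
    using hf (φ x) (φ y) t ht

lemma IsLogConcave.quasiconcaveOn {f : F → ℝ} (hf : IsLogConcave f) (hf0 : ∀ x, 0 ≤ f x) :
    QuasiconcaveOn ℝ univ f := by
  rintro r x ⟨-, hx⟩ y ⟨-, hy⟩ a b ha hb hab
  refine ⟨mem_univ _, ?_⟩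
  rcases le_or_gt r 0 with hr | hr
  · exact hr.trans (hf0 _)
  obtain rfl : a = 1 - b := by linarith
  calc r = r ^ (1 - b) * r ^ b := by rw [← Real.rpow_add hr, sub_add_cancel, Real.rpow_one]
    _ ≤ f x ^ (1 - b) * f y ^ b := by have := hf0 x; gcongr
    _ ≤ f ((1 - b) • x + b • y) := hf x y b ⟨hb, by linarith⟩

end LogConcave

lemma volume_inter_Icc_le_volume_inter_Icc_centered {S : Set ℝ} (hS : S.OrdConnected)
    (hS_neg : ∀ x ∈ S, -x ∈ S) (a b : ℝ) :
    volume (S ∩ Icc a b) ≤ volume (S ∩ Icc (-((b - a) / 2)) ((b - a) / 2)) := by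
  set m := (b - a) / 2
  by_cases hwide : ∃ s ∈ S, m < |s|
  · obtain ⟨s, hs, hms⟩ := hwide
    have habs : |s| ∈ S ∧ -|s| ∈ S := by
      rcases abs_choice s with h | h <;> rw [h]
      · exact ⟨hs, hS_neg s hs⟩
      · exact ⟨hS_neg s hs, by rwa [neg_neg]⟩
    have hcentered : Icc (-m) m ⊆ S :=
      (Icc_subset_Icc (by linarith) hms.le).trans (hS.out habs.2 habs.1)
    calc volume (S ∩ Icc a b) ≤ volume (Icc a b) := measure_mono inter_subset_right
      _ = volume (Icc (-m) m) := by simp only [Real.volume_Icc, m]; ring_nf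
      _ = volume (S ∩ Icc (-m) m) := by rw [inter_eq_right.2 hcentered]
  · push Not at hwide
    have hnarrow : S ⊆ Icc (-m) m := fun x hx => abs_le.1 (hwide x hx)
    calc volume (S ∩ Icc a b) ≤ volume S := measure_mono inter_subset_left
      _ = volume (S ∩ Icc (-m) m) := by rw [inter_eq_left.2 hnarrow]

lemma lintegral_Icc_le_lintegral_Icc_centered {g : ℝ → ℝ} (hgm : Measurable g)
    (hg0 : ∀ x, 0 ≤ g x) (hg_even : ∀ x, g (-x) = g x) (hgq : QuasiconcaveOn ℝ univ g)
    (a b : ℝ) :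
    ∫⁻ x in Icc a b, ENNReal.ofReal (g x) ≤
      ∫⁻ x in Icc (-((b - a) / 2)) ((b - a) / 2), ENNReal.ofReal (g x) := by
  rw [lintegral_eq_lintegral_meas_le _ (ae_of_all _ hg0) hgm.aemeasurable,
    lintegral_eq_lintegral_meas_le _ (ae_of_all _ hg0) hgm.aemeasurable]
  refine lintegral_mono fun r => ?_
  have hr : MeasurableSet {x | r ≤ g x} := measurableSet_le measurable_const hgm
  rw [Measure.restrict_apply hr, Measure.restrict_apply hr]
  refine volume_inter_Icc_le_volume_inter_Icc_centered ?_ (fun x hx => ?_) a b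
  · simpa only [mem_univ, true_and] using (hgq r).ordConnected
  · show r ≤ g (-x)
    rwa [hg_even]

lemma setLIntegral_le_setLIntegral_of_half_sub_mem {g : ℝ → ℝ} (hgm : Measurable g)
    (hg0 : ∀ x, 0 ≤ g x) (hg_even : ∀ x, g (-x) = g x) (hgq : QuasiconcaveOn ℝ univ g)
    {A B : Set ℝ} (hA : IsCompact A)
    (hAc : Convex ℝ A) (hB : ∀ s ∈ A, ∀ s' ∈ A, (s - s') / 2 ∈ B) :
    ∫⁻ x in A, ENNReal.ofReal (g x) ≤ ∫⁻ x in B, ENNReal.ofReal (g x) := by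
  rcases A.eq_empty_or_nonempty with rfl | hne
  · simp
  rw [eq_Icc_of_connected_compact ⟨hne, hAc.isPreconnected⟩ hA] at hB ⊢
  generalize sInf A = a, sSup A = b at hB ⊢
  refine (lintegral_Icc_le_lintegral_Icc_centered hgm hg0 hg_even hgq a b).trans
    (lintegral_mono_set fun c hc => ?_)
  have := hB ((a + b) / 2 + c) ⟨by linarith [hc.1], by linarith [hc.2]⟩
    ((a + b) / 2 - c) ⟨by linarith [hc.2], by linarith [hc.1]⟩
  convert this using 1
  ring

section Lines

variable {F : Type*} [NormedAddCommGroup F] [InnerProductSpace ℝ F]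

/-- For a unit vector `u`, the line through `x` parallel to `u`, parametrised by the
`u`-coordinate; this is the parametrisation of the fibers in `steiner`. -/
def lineAlong (u x : F) : ℝ →ᵃ[ℝ] F :=
  AffineMap.lineMap (x - ⟪x, u⟫_ℝ • u) (x - ⟪x, u⟫_ℝ • u + u)

lemma lineAlong_apply (u x : F) (t : ℝ) : lineAlong u x t = x - ⟪x, u⟫_ℝ • u + t • u := by
  rw [lineAlong, AffineMap.lineMap_apply, vadd_eq_add, add_comm, vsub_eq_sub,
    add_sub_cancel_left]

variable {u : F} (hu : ‖u‖ = 1)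
include hu

lemma inner_lineAlong (x : F) (t : ℝ) : ⟪lineAlong u x t, u⟫_ℝ = t := by
  rw [lineAlong_apply, inner_add_left, inner_sub_left, real_inner_smul_left,
    real_inner_smul_left, real_inner_self_eq_norm_sq, hu]
  ring

lemma lineAlong_lineAlong (x : F) (s t : ℝ) :
    lineAlong u (lineAlong u x s) t = lineAlong u x t := by
  rw [lineAlong_apply _ (lineAlong u x s), inner_lineAlong hu, lineAlong_apply,
    add_sub_cancel_right, lineAlong_apply]

lemma isometry_lineAlong (x : F) : Isometry (lineAlong u x) :=
  Isometry.of_dist_eq fun s t => by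
    rw [dist_eq_norm, lineAlong_apply, lineAlong_apply, add_sub_add_left_eq_sub, ← sub_smul,
      norm_smul, hu, mul_one, Real.norm_eq_abs, Real.dist_eq]

end Lines

lemma lineAlong_half_sub_mem_steiner {n : ℕ} {u : E n} (hu : ‖u‖ = 1) {K : Set (E n)}
    {x : E n} {s s' : ℝ} (hs : lineAlong u x s ∈ K) (hs' : lineAlong u x s' ∈ K) :
    lineAlong u x ((s - s') / 2) ∈ steiner u K := by
  refine ⟨s, s', ?_, ?_, inner_lineAlong hu x _⟩ <;>
    rwa [← lineAlong_apply, lineAlong_lineAlong hu]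

section Coordinates

variable {ι : Type*} [Fintype ι] [DecidableEq ι]

lemma lineAlong_single_eq_toLp_update (x : EuclideanSpace ℝ ι) (i : ι) (t : ℝ) :
    lineAlong (EuclideanSpace.single i 1) x t =
      WithLp.toLp 2 (Function.update (WithLp.ofLp x) i t) := by
  ext j
  rcases eq_or_ne j i with rfl | hj
  · simp [lineAlong_apply, EuclideanSpace.inner_single_right]
  · simp [lineAlong_apply, hj]

lemma apply_lineAlong_single_neg {f : EuclideanSpace ℝ ι → ℝ}
    (hfu : ∀ (x : EuclideanSpace ℝ ι) (ε : ι → ℝ), (∀ i, ε i = 1 ∨ ε i = -1) →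
      f (WithLp.toLp 2 (fun i => ε i * x i)) = f x)
    (x : EuclideanSpace ℝ ι) (i : ι) (t : ℝ) :
    f (lineAlong (EuclideanSpace.single i 1) x (-t)) =
      f (lineAlong (EuclideanSpace.single i 1) x t) := by
  convert hfu (lineAlong (EuclideanSpace.single i 1) x t) (Function.update 1 i (-1)) _ using 2
  · ext j
    rcases eq_or_ne j i with rfl | hj
    · simp [lineAlong_single_eq_toLp_update]
    · simp [lineAlong_single_eq_toLp_update, hj]
  · intro j
    rcases eq_or_ne j i with rfl | hj
    · simp
    · simp [hj]

end Coordinates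

lemma lintegral_le_lintegral_of_lintegral_update_le {ι : Type*} [Fintype ι] [DecidableEq ι]
    {X : ι → Type*} [∀ i, MeasurableSpace (X i)] (μ : ∀ i, Measure (X i))
    [∀ i, SigmaFinite (μ i)]
    {F G : (∀ i, X i) → ℝ≥0∞} (hF : Measurable F) (hG : Measurable G) (i : ι)
    (h : ∀ x, ∫⁻ t, F (Function.update x i t) ∂μ i ≤ ∫⁻ t, G (Function.update x i t) ∂μ i) :
    ∫⁻ x, F x ∂Measure.pi μ ≤ ∫⁻ x, G x ∂Measure.pi μ := by
  rcases isEmpty_or_nonempty (∀ j, X j) with hX | ⟨⟨x⟩⟩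
  · simp [Measure.eq_zero_of_isEmpty]
  rw [lintegral_eq_lmarginal_univ x, lintegral_eq_lmarginal_univ x,
    lmarginal_erase' F hF (Finset.mem_univ i), lmarginal_erase' G hG (Finset.mem_univ i)]
  exact lmarginal_mono h x

lemma setLIntegral_le_setLIntegral_of_lineAlong_single {ι : Type*} [Fintype ι] [DecidableEq ι]
    {h : EuclideanSpace ℝ ι → ℝ≥0∞} (hh : Measurable h) {A B : Set (EuclideanSpace ℝ ι)}
    (hA : MeasurableSet A) (hB : MeasurableSet B) (i : ι)
    (hfiber : ∀ x, ∫⁻ t in lineAlong (EuclideanSpace.single i 1) x ⁻¹' A,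
        h (lineAlong (EuclideanSpace.single i 1) x t) ≤
      ∫⁻ t in lineAlong (EuclideanSpace.single i 1) x ⁻¹' B,
        h (lineAlong (EuclideanSpace.single i 1) x t)) :
    ∫⁻ x in A, h x ≤ ∫⁻ x in B, h x := by
  have hu : ‖(EuclideanSpace.single i 1 : EuclideanSpace ℝ ι)‖ = 1 := by simp
  have hfiber_indicator : ∀ (S : Set (EuclideanSpace ℝ ι)), MeasurableSet S → ∀ x,
      ∫⁻ t in lineAlong (EuclideanSpace.single i 1) x ⁻¹' S,
        h (lineAlong (EuclideanSpace.single i 1) x t) =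
      ∫⁻ t, S.indicator h (WithLp.toLp 2 (Function.update (WithLp.ofLp x) i t)) := by
    intro S hS x
    have hline := (isometry_lineAlong hu x).continuous.measurable
    rw [← lintegral_indicator (hS.preimage hline)]
    simp_rw [← lineAlong_single_eq_toLp_update]
    rfl
  have hmp := PiLp.volume_preserving_toLp ι
  rw [← lintegral_indicator hA, ← lintegral_indicator hB,
    ← hmp.lintegral_comp (hh.indicator hA), ← hmp.lintegral_comp (hh.indicator hB), volume_pi]
  refine lintegral_le_lintegral_of_lintegral_update_le _
    ((hh.indicator hA).comp hmp.measurable) ((hh.indicator hB).comp hmp.measurable) i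
    fun p => ?_
  simpa only [hfiber_indicator A hA, hfiber_indicator B hB] using hfiber (WithLp.toLp 2 p)

lemma setLIntegral_lineAlong_le_steiner {n : ℕ} {u : E n} (hu : ‖u‖ = 1) {f : E n → ℝ}
    (hfm : Measurable f) (hf0 : ∀ x, 0 ≤ f x) (hflc : IsLogConcave f) (x : E n)
    (heven : ∀ t, f (lineAlong u x (-t)) = f (lineAlong u x t)) {K T : Set (E n)}
    (hK : IsCompact K) (hKc : Convex ℝ K) (hT : steiner u K ⊆ T) :
    ∫⁻ t in lineAlong u x ⁻¹' K, ENNReal.ofReal (f (lineAlong u x t)) ≤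
      ∫⁻ t in lineAlong u x ⁻¹' T, ENNReal.ofReal (f (lineAlong u x t)) := by
  have hline := isometry_lineAlong hu x
  exact setLIntegral_le_setLIntegral_of_half_sub_mem (hfm.comp hline.continuous.measurable)
    (fun t => hf0 _) heven ((hflc.comp_affineMap _).quasiconcaveOn fun t => hf0 _)
    (hline.isClosedEmbedding.isProperMap.isCompact_preimage hK) (hKc.affine_preimage _)
    fun s hs s' hs' => hT (lineAlong_half_sub_mem_steiner hu hs hs')

theorem blaschke_santalo_stmt_general (n : ℕ) (f : E n → ℝ) (hfm : Measurable f) (hf0 : ∀ x, 0 ≤ f x)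
    (hflc : ∀ x y : E n, ∀ t : ℝ, t ∈ Set.Icc (0 : ℝ) 1 →
      f x ^ (1 - t) * f y ^ t ≤ f ((1 - t) • x + t • y))
    (hfu : ∀ (x : E n) (ε : Fin n → ℝ), (∀ i, ε i = 1 ∨ ε i = -1) →
      f (WithLp.toLp 2 (fun i => ε i * x i) : E n) = f x)
    (μ : Measure (E n)) (hμ : μ = volume.withDensity fun x => ENNReal.ofReal (f x))
    (K : Set (E n)) (hK : IsConvexBody K)
    (i : Fin n) (u : E n) (hu : u = EuclideanSpace.single i (1 : ℝ)) :
    μ K ≤ μ (steiner u K) := by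
  obtain ⟨hKc, hKconv, -⟩ := hK
  -- `steiner u K` is replaced by a measurable hull: same measure, larger fibers.
  rw [← measure_toMeasurable (steiner u K)]
  have hT := measurableSet_toMeasurable μ (steiner u K)
  have hST := subset_toMeasurable μ (steiner u K)
  generalize toMeasurable μ (steiner u K) = T at hT hST ⊢
  subst hμ hu
  rw [withDensity_apply _ hKc.measurableSet, withDensity_apply _ hT]
  refine setLIntegral_le_setLIntegral_of_lineAlong_single hfm.ennreal_ofReal
    hKc.measurableSet hT i fun x => ?_
  exact setLIntegral_lineAlong_le_steiner (by simp) hfm hf0 hflc x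
    (apply_lineAlong_single_neg hfu x i) hKc hKconv hST

theorem blaschke_santalo_stmt (n : ℕ) (f : E n → ℝ) (hfm : Measurable f) (hf0 : ∀ x, 0 ≤ f x)
    (hflc : ∀ x y : E n, ∀ t : ℝ, t ∈ Set.Icc (0 : ℝ) 1 →
      f x ^ (1 - t) * f y ^ t ≤ f ((1 - t) • x + t • y))
    (hfu : ∀ (x : E n) (ε : Fin n → ℝ), (∀ i, ε i = 1 ∨ ε i = -1) →
      f (WithLp.toLp 2 (fun i => ε i * x i) : E n) = f x)
    (μ : Measure (E n)) (hμ : μ = volume.withDensity fun x => ENNReal.ofReal (f x))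
    (K : Set (E n)) (hK : IsConvexBody K) (hsym : K = -K)
    (i : Fin n) (u : E n) (hu : u = EuclideanSpace.single i (1 : ℝ)) :
    μ K ≤ μ (steiner u K) :=
  blaschke_santalo_stmt_general n f hfm hf0 hflc hfu μ hμ K hK i u hu
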